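/- Let 𝔤 be a complex reductive Lie algebra with principal sl₂-triple {e,h,f} (in a semisimple quotient sense) and decomposition 𝔤 = 𝔷_𝔤(e) ⊕ 𝔫. Define π: S(𝔤[t]) → S(𝔷_𝔤(e)[t]) on generators by π(x[n]) = x[n] for x ∈ 𝔷_𝔤(e) and π(x[n]) = δ_{0,n}⟨x,f⟩ for x ∈ 𝔫. Then π commutes with the derivation D (D(x[n]) = (n+1)x[n+1] on the source and target) when restricted appropriately, and if restriction of functions induces an isomorphism S(𝔤)^𝔤 ≅ ℂ[f + 𝔷_𝔤(e)] (Kostant's theorem), then π maps the universal Gaudin subalgebra A_𝔤 = ℂ[D^k Φ_i] isomorphically onto S(𝔷_𝔤(e)[t]). -/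

import Mathlib

open MvPolynomial

/-- The image in `S(𝔤[t])` (polynomials in variables `x_a[k]`) of `x ⊗ tᵏ`. -/
noncomputable def lin {ι L : Type*} [LieRing L] [LieAlgebra ℂ L]
    (b : Module.Basis ι ℂ L) (x : L) (k : ℕ) : MvPolynomial (ι × ℕ) ℂ :=
  (b.repr x).sum fun a c => MvPolynomial.C c * MvPolynomial.X (a, k)

/-- The adjoint action of `x ∈ 𝔤` on `S(𝔤[t])` by derivations. -/
noncomputable def lact {ι L : Type*} [DecidableEq ι] [LieRing L] [LieAlgebra ℂ L]
    (b : Module.Basis ι ℂ L) (x : L) (f : MvPolynomial (ι × ℕ) ℂ) :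
    MvPolynomial (ι × ℕ) ℂ :=
  ∑ p ∈ f.vars, pderiv p f * lin b ⁅x, b p.1⁆ p.2

/-- The derivation `D` of `S(𝔤[t])` with `D(x[n]) = (n+1)·x[n+1]`. -/
noncomputable def Dop {ι : Type*} [DecidableEq ι]
    (f : MvPolynomial (ι × ℕ) ℂ) : MvPolynomial (ι × ℕ) ℂ :=
  ∑ p ∈ f.vars, ((p.2 + 1 : ℕ) : ℂ) • (pderiv p f * MvPolynomial.X (p.1, p.2 + 1))

/-!
`π` is an algebra map and `D` a derivation, both determined by their values on the variables,
so `π ∘ D = D ∘ π` is a check on each `x_a[n]`; for `a ∉ zs` both sides vanish, because `D`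
kills the constant `⟨x_a, f⟩` and `π (x_a[n+1]) = 0`.

Kostant's theorem provides, for each `a ∈ zs`, the invariant `F a` with `π (F a) = x_a[0]`.
The algebra map `ρ : x_a[k] ↦ Dᵏ (F a) / k!` commutes with `D`, hence `π ∘ ρ` is the identity
of `S(𝔷_𝔤(e)[t])`, and `ρ` lands in `A_𝔤`, which is `D`-stable and contains all invariants.
Conversely `ρ ∘ π` commutes with `D` and fixes every `Φ i` by the uniqueness in Kostant's
theorem, so it is the identity on `A_𝔤 = ℂ[DᵏΦᵢ]`.
-/

namespace MvPolynomial

variable {R σ A : Type*} [CommSemiring R] [CommSemiring A] [Algebra R A]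

theorem derivation_eq_sum_pderiv [DecidableEq σ]
    (d : Derivation R (MvPolynomial σ R) (MvPolynomial σ R)) (f : MvPolynomial σ R) :
    d f = ∑ i ∈ f.vars, pderiv i f * d (X i) := by
  let d' : Derivation R (MvPolynomial σ R) (MvPolynomial σ R) :=
    ∑ i ∈ f.vars, d (X i) • pderiv i
  have hd' (g : MvPolynomial σ R) : d' g = ∑ i ∈ f.vars, pderiv i g * d (X i) := by
    rw [← Derivation.coeFnAddMonoidHom_apply, map_sum, Finset.sum_apply]
    simp only [Derivation.coeFnAddMonoidHom_apply, Derivation.smul_apply, smul_eq_mul, mul_comm]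
  rw [← hd']
  refine derivation_eq_of_forall_mem_vars fun i hi => ?_
  rw [hd', Finset.sum_eq_single_of_mem i hi fun j _ hji => by
    rw [pderiv_X, Pi.single_apply, if_neg hji.symm, zero_mul], pderiv_X_self, one_mul]

theorem semiconj_derivation_of_forall_X (φ : MvPolynomial σ R →ₐ[R] A)
    {d : Derivation R (MvPolynomial σ R) (MvPolynomial σ R)} {d' : Derivation R A A}
    (h : ∀ i, φ (d (X i)) = d' (φ (X i))) : Function.Semiconj φ d d' := by
  intro f
  induction f using MvPolynomial.induction_on with
  | C a =>
    rw [derivation_C, map_zero, ← algebraMap_eq, AlgHom.commutes, Derivation.map_algebraMap]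
  | add p q hp hq => rw [map_add, map_add, map_add, map_add, hp, hq]
  | mul_X p i hp => simp only [Derivation.leibniz, smul_eq_mul, map_add, map_mul, hp, h]

theorem supported_le_comap {φ : MvPolynomial σ R →ₐ[R] A} {S : Subalgebra R A} {s : Set σ}
    (h : ∀ i ∈ s, φ (X i) ∈ S) : supported R s ≤ S.comap φ :=
  Algebra.adjoin_le (Set.image_subset_iff.2 h)

theorem eqOn_supported {φ ψ : MvPolynomial σ R →ₐ[R] A} {s : Set σ}
    (h : ∀ i ∈ s, φ (X i) = ψ (X i)) : Set.EqOn φ ψ (supported R s) :=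
  AlgHom.eqOn_adjoin_iff.2 (Set.forall_mem_image.2 h)

end MvPolynomial

section Gaudin

variable {ι : Type*} [DecidableEq ι]

noncomputable def derivationDop (ι : Type*) :
    Derivation ℂ (MvPolynomial (ι × ℕ) ℂ) (MvPolynomial (ι × ℕ) ℂ) :=
  mkDerivation ℂ fun p => ((p.2 + 1 : ℕ) : ℂ) • X (p.1, p.2 + 1)

theorem coe_derivationDop : ⇑(derivationDop ι) = Dop := by
  ext1 f
  rw [derivation_eq_sum_pderiv, Dop]
  refine Finset.sum_congr rfl fun p _ => ?_
  rw [derivationDop, mkDerivation_X, mul_smul_comm]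

theorem Dop_X (p : ι × ℕ) : Dop (X p) = ((p.2 + 1 : ℕ) : ℂ) • X (p.1, p.2 + 1) := by
  rw [← coe_derivationDop, derivationDop, mkDerivation_X]

theorem Dop_smul (c : ℂ) (f : MvPolynomial (ι × ℕ) ℂ) : Dop (c • f) = c • Dop f := by
  rw [← coe_derivationDop, Derivation.map_smul]

theorem Dop_iterate_X_zero (a : ι) (k : ℕ) :
    Dop^[k] (X (a, 0)) = (k.factorial : ℂ) • (X (a, k) : MvPolynomial (ι × ℕ) ℂ) := by
  induction k with
  | zero => simp
  | succ k ih =>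
    rw [Function.iterate_succ_apply', ih, Dop_smul, Dop_X, smul_smul, Nat.factorial_succ,
      Nat.cast_mul, mul_comm]

theorem semiconj_Dop_of_forall_X
    {φ : MvPolynomial (ι × ℕ) ℂ →ₐ[ℂ] MvPolynomial (ι × ℕ) ℂ}
    (h : ∀ p, φ (Dop (X p)) = Dop (φ (X p))) : Function.Semiconj φ Dop Dop := by
  rw [← coe_derivationDop] at h ⊢
  exact semiconj_derivation_of_forall_X φ h

variable {L : Type*} [LieRing L] [LieAlgebra ℂ L] (b : Module.Basis ι ℂ L)

noncomputable def derivationLact (x : L) :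
    Derivation ℂ (MvPolynomial (ι × ℕ) ℂ) (MvPolynomial (ι × ℕ) ℂ) :=
  mkDerivation ℂ fun p => lin b ⁅x, b p.1⁆ p.2

theorem coe_derivationLact (x : L) : ⇑(derivationLact b x) = lact b x := by
  ext1 f
  rw [derivation_eq_sum_pderiv, lact]
  simp only [derivationLact, mkDerivation_X]

/-- The copy of `S(𝔤)^𝔤` inside `S(𝔤[t])`. -/
noncomputable def levelZeroInvariants : Subalgebra ℂ (MvPolynomial (ι × ℕ) ℂ) where
  carrier := {f | (∀ p ∈ f.vars, p.2 = 0) ∧ ∀ x, lact b x f = 0}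
  mul_mem' {f g} hf hg := by
    refine ⟨fun p hp => ?_, fun x => ?_⟩
    · rcases Finset.mem_union.1 (vars_mul f g hp) with hp | hp
      exacts [hf.1 p hp, hg.1 p hp]
    · rw [← coe_derivationLact, Derivation.leibniz, coe_derivationLact, hf.2, hg.2,
        smul_zero, smul_zero, add_zero]
  add_mem' {f g} hf hg := by
    refine ⟨fun p hp => ?_, fun x => ?_⟩
    · rcases Finset.mem_union.1 (vars_add_subset f g hp) with hp | hp
      exacts [hf.1 p hp, hg.1 p hp]
    · rw [← coe_derivationLact, map_add, coe_derivationLact, hf.2, hg.2, add_zero]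
  algebraMap_mem' c := by
    refine ⟨fun p hp => ?_, fun x => ?_⟩
    · rw [algebraMap_eq, vars_C] at hp
      exact absurd hp (Finset.notMem_empty p)
    · rw [← coe_derivationLact, Derivation.map_algebraMap]

variable {r : ℕ} (Φ : Fin r → MvPolynomial (ι × ℕ) ℂ)

noncomputable def gaudinAlgebra : Subalgebra ℂ (MvPolynomial (ι × ℕ) ℂ) :=
  Algebra.adjoin ℂ {g | ∃ (k : ℕ) (i : Fin r), g = Dop^[k] (Φ i)}

theorem mapsTo_Dop_gaudinAlgebra :
    Set.MapsTo Dop (gaudinAlgebra Φ : Set (MvPolynomial (ι × ℕ) ℂ)) (gaudinAlgebra Φ) := by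
  intro f hf
  induction hf using Algebra.adjoin_induction with
  | mem g hg =>
    obtain ⟨k, i, rfl⟩ := hg
    exact Algebra.subset_adjoin ⟨k + 1, i, (Function.iterate_succ_apply' _ _ _).symm⟩
  | algebraMap c =>
    rw [← coe_derivationDop, Derivation.map_algebraMap]
    exact zero_mem _
  | add f g _ _ hf hg =>
    rw [← coe_derivationDop, map_add, coe_derivationDop]
    exact add_mem hf hg
  | mul f g hf' hg' hf hg =>
    rw [← coe_derivationDop, Derivation.leibniz, coe_derivationDop]
    exact add_mem (mul_mem hf' hg) (mul_mem hg' hf)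

theorem adjoin_range_le_gaudinAlgebra : Algebra.adjoin ℂ (Set.range Φ) ≤ gaudinAlgebra Φ :=
  Algebra.adjoin_mono (Set.range_subset_iff.2 fun i => ⟨0, i, rfl⟩)

theorem eqOn_gaudinAlgebra {φ : MvPolynomial (ι × ℕ) ℂ →ₐ[ℂ] MvPolynomial (ι × ℕ) ℂ}
    (hφ : Function.Semiconj φ Dop Dop) (hΦ : ∀ i, φ (Φ i) = Φ i) :
    Set.EqOn φ (AlgHom.id ℂ _) (gaudinAlgebra Φ) := by
  refine AlgHom.eqOn_adjoin_iff.2 ?_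
  rintro _ ⟨k, i, rfl⟩
  rw [(hφ.iterate_right k).eq, hΦ]
  rfl

end Gaudin

section SlicePi

variable {ι : Type*} (zs : Set ι) [DecidablePred (· ∈ zs)]

/-- The map `π`; `c a` is the value `⟨x_a, f⟩` of `x_a[0]` at the point `f` of the slice. -/
noncomputable def slicePi (c : ι → ℂ) :
    MvPolynomial (ι × ℕ) ℂ →ₐ[ℂ] MvPolynomial (ι × ℕ) ℂ :=
  aeval fun p => if p.1 ∈ zs then X p else if p.2 = 0 then C (c p.1) else 0

theorem slicePi_mem_supported (c : ι → ℂ) {s : Set (ι × ℕ)} {f : MvPolynomial (ι × ℕ) ℂ}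
    (hf : f ∈ supported ℂ s) : slicePi zs c f ∈ supported ℂ (Prod.fst ⁻¹' zs ∩ s) := by
  refine supported_le_comap (S := supported ℂ _) (φ := slicePi zs c) (fun p hp => ?_) hf
  simp only [slicePi, aeval_X]
  split_ifs with hz
  · exact X_mem_supported.2 ⟨hz, hp⟩
  · exact Subalgebra.algebraMap_mem _ _
  · exact zero_mem _

variable [DecidableEq ι]

theorem slicePi_semiconj_Dop (c : ι → ℂ) : Function.Semiconj (slicePi zs c) Dop Dop := by
  refine semiconj_Dop_of_forall_X fun p => ?_
  simp only [slicePi, Dop_X, map_smul, aeval_X]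
  by_cases hp : p.1 ∈ zs
  · simp only [if_pos hp, Dop_X]
  · rw [if_neg hp, if_neg hp, if_neg p.2.succ_ne_zero, smul_zero, ← coe_derivationDop]
    split_ifs
    exacts [(derivation_C _ _).symm, (map_zero (derivationDop ι)).symm]

end SlicePi

section SliceSection

variable {ι : Type*} [DecidableEq ι]

/-- The map `ρ`, for `F a` the invariant with `π (F a) = x_a[0]`. -/
noncomputable def sliceSection (F : ι → MvPolynomial (ι × ℕ) ℂ) :
    MvPolynomial (ι × ℕ) ℂ →ₐ[ℂ] MvPolynomial (ι × ℕ) ℂ :=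
  aeval fun p => (p.2.factorial : ℂ)⁻¹ • Dop^[p.2] (F p.1)

variable (F : ι → MvPolynomial (ι × ℕ) ℂ)

theorem sliceSection_X (p : ι × ℕ) :
    sliceSection F (X p) = (p.2.factorial : ℂ)⁻¹ • Dop^[p.2] (F p.1) :=
  aeval_X _ p

theorem sliceSection_X_zero (a : ι) : sliceSection F (X (a, 0)) = F a := by
  simp [sliceSection_X]

theorem sliceSection_semiconj_Dop : Function.Semiconj (sliceSection F) Dop Dop := by
  refine semiconj_Dop_of_forall_X fun ⟨a, k⟩ => ?_
  simp only [sliceSection, Dop_X, map_smul, aeval_X, Dop_smul, smul_smul,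
    ← Function.iterate_succ_apply' Dop]
  congr 1
  rw [Nat.factorial_succ, Nat.cast_mul, mul_inv, ← mul_assoc,
    mul_inv_cancel₀ (Nat.cast_ne_zero.2 k.succ_ne_zero), one_mul]

theorem supported_le_comap_sliceSection (zs : Set ι)
    {S : Subalgebra ℂ (MvPolynomial (ι × ℕ) ℂ)}
    (hS : Set.MapsTo Dop (S : Set (MvPolynomial (ι × ℕ) ℂ)) S) (hF : ∀ a ∈ zs, F a ∈ S) :
    supported ℂ (Prod.fst ⁻¹' zs : Set (ι × ℕ)) ≤ S.comap (sliceSection F) := by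
  refine supported_le_comap ?_
  rintro ⟨a, k⟩ (ha : a ∈ zs)
  rw [sliceSection_X]
  exact S.smul_mem (hS.iterate k (hF a ha)) _

variable (zs : Set ι) [DecidablePred (· ∈ zs)]

theorem slicePi_sliceSection {c : ι → ℂ} (hF : ∀ a ∈ zs, slicePi zs c (F a) = X (a, 0)) :
    Set.LeftInvOn (slicePi zs c) (sliceSection F)
      (supported ℂ (Prod.fst ⁻¹' zs : Set (ι × ℕ))) := by
  refine eqOn_supported (φ := (slicePi zs c).comp (sliceSection F)) (ψ := AlgHom.id ℂ _) ?_
  rintro ⟨a, k⟩ (ha : a ∈ zs)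
  simp only [AlgHom.comp_apply, sliceSection, aeval_X, map_smul,
    ((slicePi_semiconj_Dop zs c).iterate_right k).eq, hF a ha, Dop_iterate_X_zero, smul_smul,
    inv_mul_cancel₀ (Nat.cast_ne_zero.2 k.factorial_ne_zero : (k.factorial : ℂ) ≠ 0),
    one_smul, AlgHom.id_apply]

variable {L : Type*} [LieRing L] [LieAlgebra ℂ L] {b : Module.Basis ι ℂ L}

theorem leftInvOn_sliceSection {c : ι → ℂ} {r : ℕ} {Φ : Fin r → MvPolynomial (ι × ℕ) ℂ}
    (hinj : Set.InjOn (slicePi zs c) (levelZeroInvariants b))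
    (hF : ∀ a ∈ zs, F a ∈ levelZeroInvariants b ∧ slicePi zs c (F a) = X (a, 0))
    (hΦ : ∀ i, Φ i ∈ levelZeroInvariants b) :
    Set.LeftInvOn (sliceSection F) (slicePi zs c) (gaudinAlgebra Φ) := by
  refine fun f hf => eqOn_gaudinAlgebra Φ (φ := (sliceSection F).comp (slicePi zs c))
    ((sliceSection_semiconj_Dop F).comp_left (slicePi_semiconj_Dop zs c)) (fun i => ?_) hf
  have hπΦ := slicePi_mem_supported zs c
    (mem_supported.2 (hΦ i).1 : Φ i ∈ supported ℂ (Prod.snd ⁻¹' {0}))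
  have hρπΦ : sliceSection F (slicePi zs c (Φ i)) ∈ levelZeroInvariants b := by
    refine (Subalgebra.mem_comap _ _ _).1 (supported_le_comap ?_ hπΦ)
    rintro ⟨a, _⟩ ⟨ha, rfl⟩
    rw [sliceSection_X_zero]
    exact (hF a ha).1
  have hπρ : slicePi zs c (sliceSection F (slicePi zs c (Φ i))) = slicePi zs c (Φ i) :=
    (slicePi_sliceSection F zs fun a ha => (hF a ha).2).eq
      (supported_mono Set.inter_subset_left hπΦ)
  exact hinj hρπΦ (hΦ i) hπρ

end SliceSection

theorem statement17_general {ι L : Type*} [DecidableEq ι]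
    [LieRing L] [LieAlgebra ℂ L] (b : Module.Basis ι ℂ L)
    (κ : L →ₗ[ℂ] L →ₗ[ℂ] ℂ)
    (f₀ : L)
    (zs : Set ι) [DecidablePred (· ∈ zs)]
    (r : ℕ) (Φ : Fin r → MvPolynomial (ι × ℕ) ℂ)
    (hdeg : ∀ i, ∀ p ∈ (Φ i).vars, p.2 = 0)
    (hinv : ∀ i (x : L), lact b x (Φ i) = 0)
    (hgen : ∀ f : MvPolynomial (ι × ℕ) ℂ, (∀ p ∈ f.vars, p.2 = 0) →
      (∀ x : L, lact b x f = 0) → f ∈ Algebra.adjoin ℂ (Set.range Φ)) :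
    let π : MvPolynomial (ι × ℕ) ℂ →ₐ[ℂ] MvPolynomial (ι × ℕ) ℂ :=
      aeval fun p : ι × ℕ =>
        if p.1 ∈ zs then (X p : MvPolynomial (ι × ℕ) ℂ)
        else if p.2 = 0 then C (κ (b p.1) f₀) else 0
    let A : Subalgebra ℂ (MvPolynomial (ι × ℕ) ℂ) :=
      Algebra.adjoin ℂ
        {g : MvPolynomial (ι × ℕ) ℂ | ∃ (k : ℕ) (i : Fin r), g = Dop^[k] (Φ i)}
    (∀ f : MvPolynomial (ι × ℕ) ℂ, π (Dop f) = Dop (π f)) ∧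
    ((∀ g : MvPolynomial (ι × ℕ) ℂ, (∀ p ∈ g.vars, p.1 ∈ zs ∧ p.2 = 0) →
        ∃! f : MvPolynomial (ι × ℕ) ℂ,
          ((∀ p ∈ f.vars, p.2 = 0) ∧ ∀ x : L, lact b x f = 0) ∧ π f = g) →
      Set.InjOn π (A : Set (MvPolynomial (ι × ℕ) ℂ)) ∧
      (∀ g : MvPolynomial (ι × ℕ) ℂ, (∀ p ∈ g.vars, p.1 ∈ zs) →
        ∃ f ∈ A, π f = g) ∧
      (∀ f ∈ A, ∀ p ∈ (π f).vars, p.1 ∈ zs)) := by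
  intro π A
  have hπ : π = slicePi zs fun a => κ (b a) f₀ := rfl
  clear_value π
  subst hπ
  set π := slicePi zs fun a => κ (b a) f₀
  refine ⟨slicePi_semiconj_Dop zs _, fun hKostant => ?_⟩
  have hinj : Set.InjOn π (levelZeroInvariants b) := fun f₁ h₁ f₂ h₂ h =>
    (hKostant (π f₁) (mem_supported.1 (slicePi_mem_supported zs _ (mem_supported.2 h₁.1)))).unique
      ⟨h₁, rfl⟩ ⟨h₂, h.symm⟩
  choose! F hF using fun a (ha : a ∈ zs) =>
    (hKostant (X (a, 0)) (by simpa [vars_X] using ha)).exists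
  have hπρ := slicePi_sliceSection F zs fun a ha => (hF a ha).2
  have hρA := supported_le_comap_sliceSection F zs (mapsTo_Dop_gaudinAlgebra Φ) fun a ha =>
    adjoin_range_le_gaudinAlgebra Φ (hgen _ (hF a ha).1.1 (hF a ha).1.2)
  exact ⟨(leftInvOn_sliceSection F zs hinj hF fun i => ⟨hdeg i, hinv i⟩).injOn,
    fun g hg => ⟨_, hρA (mem_supported.2 hg), hπρ (mem_supported.2 hg)⟩,
    fun f _ p hp => (mem_supported.1 (slicePi_mem_supported zs _ (mem_supported_vars f)) hp).1⟩

/-- Let `𝔤` be a complex reductive Lie algebra with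
`sl₂`-triple `(e, h, f₀)` and decomposition `𝔤 = 𝔷_𝔤(e) ⊕ 𝔫` (the basis `b` is
adapted: the basis vectors indexed by `zs` span the centralizer `𝔷_𝔤(e)`).
Define `π : S(𝔤[t]) → S(𝔷_𝔤(e)[t])` by `π(x[n]) = x[n]` for `x ∈ 𝔷_𝔤(e)` and
`π(x[n]) = δ_{0,n}⟨x,f₀⟩` for `x ∈ 𝔫`.  Then `π` commutes with the derivation
`D`, and — assuming Kostant's theorem, that restriction of invariants to the
slice `f₀ + 𝔷_𝔤(e)` is an isomorphism `S(𝔤)^𝔤 ≅ ℂ[f₀ + 𝔷_𝔤(e)]` — `π` maps the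
universal Gaudin subalgebra `A_𝔤 = ℂ[DᵏΦᵢ]` isomorphically onto
`S(𝔷_𝔤(e)[t])` (injectively, with image all polynomials in the `zs`-variables). -/
theorem statement17 {ι L : Type*} [DecidableEq ι] [Fintype ι]
    [LieRing L] [LieAlgebra ℂ L] [FiniteDimensional ℂ L] (b : Module.Basis ι ℂ L)
    (κ : L →ₗ[ℂ] L →ₗ[ℂ] ℂ)
    (hκsymm : ∀ x y : L, κ x y = κ y x)
    (hκinv : ∀ x y z : L, κ ⁅x, y⁆ z + κ y ⁅x, z⁆ = 0)
    (hκnondeg : ∀ x : L, (∀ y : L, κ x y = 0) → x = 0)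
    (e h f₀ : L)
    (hhe : ⁅h, e⁆ = (2 : ℂ) • e) (hhf : ⁅h, f₀⁆ = (-2 : ℂ) • f₀)
    (hef : ⁅e, f₀⁆ = h)
    (zs : Set ι) [DecidablePred (· ∈ zs)]
    (hzs : ∀ a : ι, a ∈ zs ↔ ⁅e, b a⁆ = 0)
    (hzspan : ∀ x : L, ⁅e, x⁆ = 0 → x ∈ Submodule.span ℂ (b '' zs))
    (r : ℕ) (Φ : Fin r → MvPolynomial (ι × ℕ) ℂ)
    (hdeg : ∀ i, ∀ p ∈ (Φ i).vars, p.2 = 0)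
    (hinv : ∀ i (x : L), lact b x (Φ i) = 0)
    (hind : AlgebraicIndependent ℂ Φ)
    (hgen : ∀ f : MvPolynomial (ι × ℕ) ℂ, (∀ p ∈ f.vars, p.2 = 0) →
      (∀ x : L, lact b x f = 0) → f ∈ Algebra.adjoin ℂ (Set.range Φ)) :
    let π : MvPolynomial (ι × ℕ) ℂ →ₐ[ℂ] MvPolynomial (ι × ℕ) ℂ :=
      aeval fun p : ι × ℕ =>
        if p.1 ∈ zs then (X p : MvPolynomial (ι × ℕ) ℂ)
        else if p.2 = 0 then C (κ (b p.1) f₀) else 0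
    let A : Subalgebra ℂ (MvPolynomial (ι × ℕ) ℂ) :=
      Algebra.adjoin ℂ
        {g : MvPolynomial (ι × ℕ) ℂ | ∃ (k : ℕ) (i : Fin r), g = Dop^[k] (Φ i)}
    (∀ f : MvPolynomial (ι × ℕ) ℂ, π (Dop f) = Dop (π f)) ∧
    ((∀ g : MvPolynomial (ι × ℕ) ℂ, (∀ p ∈ g.vars, p.1 ∈ zs ∧ p.2 = 0) →
        ∃! f : MvPolynomial (ι × ℕ) ℂ,
          ((∀ p ∈ f.vars, p.2 = 0) ∧ ∀ x : L, lact b x f = 0) ∧ π f = g) →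
      Set.InjOn π (A : Set (MvPolynomial (ι × ℕ) ℂ)) ∧
      (∀ g : MvPolynomial (ι × ℕ) ℂ, (∀ p ∈ g.vars, p.1 ∈ zs) →
        ∃ f ∈ A, π f = g) ∧
      (∀ f ∈ A, ∀ p ∈ (π f).vars, p.1 ∈ zs)) :=
  statement17_general b κ f₀ zs r Φ hdeg hinv hgen
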